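/- For natural numbers k ≥ 1, n ≥ 2k, and a partition λ of n with λ* (λ minus its first row) a partition of m ≤ k: the number of set-partition tableaux of shape λ and content a set partition of {1,...,k} with increasing first row equals (∑_t S(k,t)·C(t,m)) · m!, where S(k,t) is the Stirling number of the second kind. Equivalently, |SPT-bar(λ,k)| = |W| · m! where |W| = ∑_t S(k,t)C(t,m) counts pairs (set partition of {1,...,k} into t blocks, choice of m distinguished blocks). -/

import Mathlib

set_option maxHeartbeats 1000000


/-- Stirling numbers of the second kind, via the standard recurrence. -/
def stirling2 : ℕ → ℕ → ℕ
  | 0, 0 => 1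
  | 0, _ + 1 => 0
  | _ + 1, 0 => 0
  | n + 1, t + 1 => (t + 1) * stirling2 n (t + 1) + stirling2 n t

/-- `P` is a set partition of `Fin k`. -/
def IsSetPartition {k : ℕ} (P : Finset (Finset (Fin k))) : Prop :=
  (∀ B ∈ P, B.Nonempty) ∧ ∀ x : Fin k, ∃! B, B ∈ P ∧ x ∈ B

/-- The maximal entry of a block, with `Fin k` identified with `{1,…,k}`. -/
def blockMax {k : ℕ} (B : Finset (Fin k)) : ℕ := B.sup (fun x => (x : ℕ) + 1)

/-- The Young diagram of an integer partition. -/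
def shapeOf {n : ℕ} (lam : Nat.Partition n) : YoungDiagram :=
  YoungDiagram.ofRowLens (lam.parts.sort (· ≥ ·)) (Multiset.pairwise_sort _ _).sortedGE

/-- The cells of the skew shape `λ/[n-t]`: the diagram of `λ` with the first `n - t`
cells of the first row removed. -/
def skewCells {n : ℕ} (lam : Nat.Partition n) (t : ℕ) : Finset (ℕ × ℕ) :=
  (shapeOf lam).cells.filter (fun c => ¬(c.1 = 0 ∧ c.2 < n - t))

open Finset

section Stirling
set_option linter.unusedSectionVars false

variable {α : Type*} [DecidableEq α] {a : α} {s : Finset α} {t : ℕ}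

def IsPartitionOn (s : Finset α) (P : Finset (Finset α)) : Prop :=
  (∀ B ∈ P, B.Nonempty) ∧ (∀ B ∈ P, B ⊆ s) ∧ ∀ x ∈ s, ∃! B, B ∈ P ∧ x ∈ B

open scoped Classical in
noncomputable def partsOn (s : Finset α) (t : ℕ) : Finset (Finset (Finset α)) :=
  (s.powerset.powerset).filter fun P => IsPartitionOn s P ∧ P.card = t

lemma mem_partsOn {s : Finset α} {t : ℕ} {P : Finset (Finset α)} :
    P ∈ partsOn s t ↔ IsPartitionOn s P ∧ P.card = t := by
  classical
  simp only [partsOn, Finset.mem_filter, Finset.mem_powerset, and_iff_right_iff_imp]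
  rintro ⟨⟨_, h2, _⟩, _⟩
  intro B hB
  simpa using h2 B hB

/-- extending a block of a partition of `s` by a new element `a`. -/
lemma extend_mem (ha : a ∉ s) {Q : Finset (Finset α)} (hQ : Q ∈ partsOn s t)
    {B : Finset α} (hB : B ∈ Q) :
    insert (insert a B) (Q.erase B) ∈ partsOn (insert a s) t := by
  rw [mem_partsOn] at hQ ⊢
  obtain ⟨⟨hne, hsub, huniq⟩, hcard⟩ := hQ
  have haB : a ∉ B := fun h => ha (hsub B hB h)
  have hnotin : insert a B ∉ Q.erase B := fun h =>
    ha (hsub _ (Finset.mem_of_mem_erase h) (Finset.mem_insert_self a B))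
  refine ⟨⟨?_, ?_, ?_⟩, ?_⟩
  · intro C hC
    rcases Finset.mem_insert.mp hC with rfl | hC
    · exact ⟨a, Finset.mem_insert_self a B⟩
    · exact hne C (Finset.mem_of_mem_erase hC)
  · intro C hC
    rcases Finset.mem_insert.mp hC with rfl | hC
    · exact Finset.insert_subset_insert a (hsub B hB)
    · exact (hsub C (Finset.mem_of_mem_erase hC)).trans (Finset.subset_insert a s)
  · intro x hx
    rcases Finset.mem_insert.mp hx with rfl | hx
    · -- x = a
      refine ⟨insert x B, ⟨Finset.mem_insert_self _ _, Finset.mem_insert_self x B⟩, ?_⟩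
      rintro C ⟨hC, haC⟩
      rcases Finset.mem_insert.mp hC with rfl | hC
      · rfl
      · exact absurd (hsub C (Finset.mem_of_mem_erase hC) haC) ha
    · -- x ∈ s
      obtain ⟨Bx, ⟨hBx, hxBx⟩, hu⟩ := huniq x hx
      have hxa : x ≠ a := fun h => ha (h ▸ hx)
      by_cases hBxB : Bx = B
      · subst hBxB
        refine ⟨insert a Bx, ⟨Finset.mem_insert_self _ _, Finset.mem_insert_of_mem hxBx⟩, ?_⟩
        rintro C ⟨hC, hxC⟩
        rcases Finset.mem_insert.mp hC with rfl | hC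
        · rfl
        · exact absurd (hu C ⟨Finset.mem_of_mem_erase hC, hxC⟩) (Finset.ne_of_mem_erase hC)
      · refine ⟨Bx, ⟨Finset.mem_insert_of_mem (Finset.mem_erase.mpr ⟨hBxB, hBx⟩), hxBx⟩, ?_⟩
        rintro C ⟨hC, hxC⟩
        rcases Finset.mem_insert.mp hC with rfl | hC
        · rcases Finset.mem_insert.mp hxC with rfl | hxC
          · exact absurd rfl hxa
          · exact absurd (hu B ⟨hB, hxC⟩).symm hBxB
        · exact hu C ⟨Finset.mem_of_mem_erase hC, hxC⟩
  · rw [Finset.card_insert_of_notMem hnotin, Finset.card_erase_of_mem hB, ← hcard]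
    have : 1 ≤ Q.card := Finset.card_pos.mpr ⟨B, hB⟩
    omega

lemma addSing_mem (ha : a ∉ s) {Q : Finset (Finset α)} (hQ : Q ∈ partsOn s t) :
    insert {a} Q ∈ partsOn (insert a s) (t + 1) := by
  rw [mem_partsOn] at hQ ⊢
  obtain ⟨⟨hne, hsub, huniq⟩, hcard⟩ := hQ
  have hsing : ({a} : Finset α) ∉ Q := fun h => ha (hsub _ h (Finset.mem_singleton_self a))
  refine ⟨⟨?_, ?_, ?_⟩, ?_⟩
  · intro C hC
    rcases Finset.mem_insert.mp hC with rfl | hC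
    · exact ⟨a, Finset.mem_singleton_self a⟩
    · exact hne C hC
  · intro C hC
    rcases Finset.mem_insert.mp hC with rfl | hC
    · simp
    · exact (hsub C hC).trans (Finset.subset_insert a s)
  · intro x hx
    rcases Finset.mem_insert.mp hx with rfl | hx
    · refine ⟨{x}, ⟨Finset.mem_insert_self _ _, Finset.mem_singleton_self x⟩, ?_⟩
      rintro C ⟨hC, hxC⟩
      rcases Finset.mem_insert.mp hC with rfl | hC
      · rfl
      · exact absurd (hsub C hC hxC) ha
    · obtain ⟨Bx, ⟨hBx, hxBx⟩, hu⟩ := huniq x hx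
      have hxa : x ≠ a := fun h => ha (h ▸ hx)
      refine ⟨Bx, ⟨Finset.mem_insert_of_mem hBx, hxBx⟩, ?_⟩
      rintro C ⟨hC, hxC⟩
      rcases Finset.mem_insert.mp hC with rfl | hC
      · exact absurd (Finset.mem_singleton.mp hxC) hxa
      · exact hu C ⟨hC, hxC⟩
  · rw [Finset.card_insert_of_notMem hsing, hcard]

-- decomposition: every partition of `insert a s` arises
lemma decomp (ha : a ∉ s) {P : Finset (Finset α)}
    (hP : IsPartitionOn (insert a s) P) :
    (∃ Q, (IsPartitionOn s Q ∧ Q.card + 1 = P.card) ∧ P = insert {a} Q) ∨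
    (∃ Q B, (IsPartitionOn s Q ∧ Q.card = P.card) ∧ B ∈ Q ∧
      P = insert (insert a B) (Q.erase B)) := by
  obtain ⟨hne, hsub, huniq⟩ := hP
  obtain ⟨B₀, ⟨hB₀, haB₀⟩, hu⟩ := huniq a (Finset.mem_insert_self a s)
  have hbsub : ∀ C ∈ P, C ≠ B₀ → C ⊆ s := by
    intro C hC hCB₀ x hx
    have hxa : x ≠ a := fun h => hCB₀ (hu C ⟨hC, h ▸ hx⟩)
    exact (Finset.mem_insert.mp (hsub C hC hx)).resolve_left hxa
  have herase_sub : ∀ C ∈ P.erase B₀, C ⊆ s := fun C hC =>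
    hbsub C (Finset.mem_of_mem_erase hC) (Finset.ne_of_mem_erase hC)
  by_cases hB0 : B₀ = {a}
  · left
    refine ⟨P.erase B₀, ⟨⟨?_, herase_sub, ?_⟩, ?_⟩, ?_⟩
    · exact fun C hC => hne C (Finset.mem_of_mem_erase hC)
    · intro x hx
      have hxa : x ≠ a := fun h => ha (h ▸ hx)
      obtain ⟨Bx, ⟨hBx, hxBx⟩, hux⟩ := huniq x (Finset.mem_insert_of_mem hx)
      have hBxB₀ : Bx ≠ B₀ := by
        intro h; subst h; rw [hB0] at hxBx; exact hxa (Finset.mem_singleton.mp hxBx)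
      refine ⟨Bx, ⟨Finset.mem_erase.mpr ⟨hBxB₀, hBx⟩, hxBx⟩, ?_⟩
      rintro C ⟨hC, hxC⟩
      exact hux C ⟨Finset.mem_of_mem_erase hC, hxC⟩
    · rw [Finset.card_erase_of_mem hB₀]
      have : 1 ≤ P.card := Finset.card_pos.mpr ⟨B₀, hB₀⟩
      omega
    · rw [← hB0, Finset.insert_erase hB₀]
  · right
    have hrest : (B₀.erase a).Nonempty := by
      rw [Finset.nonempty_iff_ne_empty]
      intro h
      rcases (Finset.erase_eq_empty_iff _ _).mp h with h1 | h1
      · exact (hne B₀ hB₀).ne_empty h1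
      · exact hB0 h1
    have hrestsub : B₀.erase a ⊆ s := by
      intro x hx
      exact (Finset.mem_insert.mp (hsub B₀ hB₀ (Finset.mem_of_mem_erase hx))).resolve_left
        (Finset.mem_erase.mp hx).1
    have hrestnotin : B₀.erase a ∉ P.erase B₀ := by
      intro h
      obtain ⟨x, hx⟩ := hrest
      have hxB₀ := Finset.mem_of_mem_erase hx
      have hxs : x ∈ s := hrestsub hx
      obtain ⟨Bx, _, hux⟩ := huniq x (Finset.mem_insert_of_mem hxs)
      have h1 := hux _ ⟨Finset.mem_of_mem_erase h, hx⟩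
      have h2 := hux B₀ ⟨hB₀, hxB₀⟩
      exact Finset.ne_of_mem_erase h (h1.trans h2.symm)
    refine ⟨insert (B₀.erase a) (P.erase B₀), B₀.erase a, ⟨⟨?_, ?_, ?_⟩, ?_⟩,
      Finset.mem_insert_self _ _, ?_⟩
    · intro C hC
      rcases Finset.mem_insert.mp hC with rfl | hC
      · exact hrest
      · exact hne C (Finset.mem_of_mem_erase hC)
    · intro C hC
      rcases Finset.mem_insert.mp hC with rfl | hC
      · exact hrestsub
      · exact herase_sub C hC
    · intro x hx
      have hxa : x ≠ a := fun h => ha (h ▸ hx)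
      obtain ⟨Bx, ⟨hBx, hxBx⟩, hux⟩ := huniq x (Finset.mem_insert_of_mem hx)
      by_cases hBxB₀ : Bx = B₀
      · subst hBxB₀
        refine ⟨Bx.erase a, ⟨Finset.mem_insert_self _ _, Finset.mem_erase.mpr ⟨hxa, hxBx⟩⟩, ?_⟩
        rintro C ⟨hC, hxC⟩
        rcases Finset.mem_insert.mp hC with rfl | hC
        · rfl
        · exact absurd (hux C ⟨Finset.mem_of_mem_erase hC, hxC⟩) (Finset.ne_of_mem_erase hC)
      · refine ⟨Bx, ⟨Finset.mem_insert_of_mem (Finset.mem_erase.mpr ⟨hBxB₀, hBx⟩), hxBx⟩, ?_⟩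
        rintro C ⟨hC, hxC⟩
        rcases Finset.mem_insert.mp hC with rfl | hC
        · exact absurd (hux B₀ ⟨hB₀, Finset.mem_of_mem_erase hxC⟩).symm hBxB₀
        · exact hux C ⟨Finset.mem_of_mem_erase hC, hxC⟩
    · rw [Finset.card_insert_of_notMem hrestnotin, Finset.card_erase_of_mem hB₀]
      have : 1 ≤ P.card := Finset.card_pos.mpr ⟨B₀, hB₀⟩
      omega
    · rw [Finset.erase_insert hrestnotin, Finset.insert_erase haB₀, Finset.insert_erase hB₀]

lemma extend_inj (ha : a ∉ s) {Q Q' : Finset (Finset α)}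
    (hQ : IsPartitionOn s Q) (hQ' : IsPartitionOn s Q')
    {B B' : Finset α} (hB : B ∈ Q) (hB' : B' ∈ Q')
    (h : insert (insert a B) (Q.erase B) = insert (insert a B') (Q'.erase B')) :
    Q = Q' ∧ B = B' := by
  have haB : a ∉ B := fun hx => ha (hQ.2.1 B hB hx)
  have haB' : a ∉ B' := fun hx => ha (hQ'.2.1 B' hB' hx)
  have key : insert a B = insert a B' := by
    have h1 : insert a B ∈ insert (insert a B') (Q'.erase B') :=
      h ▸ Finset.mem_insert_self _ _
    rcases Finset.mem_insert.mp h1 with h2 | h2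
    · exact h2
    · exact absurd (hQ'.2.1 _ (Finset.mem_of_mem_erase h2) (Finset.mem_insert_self a B)) ha
  have hBB' : B = B' := by
    rw [← Finset.erase_insert haB, ← Finset.erase_insert haB', key]
  subst hBB'
  have hnotin : insert a B ∉ Q.erase B := fun hx =>
    ha (hQ.2.1 _ (Finset.mem_of_mem_erase hx) (Finset.mem_insert_self a B))
  have hnotin' : insert a B ∉ Q'.erase B := fun hx =>
    ha (hQ'.2.1 _ (Finset.mem_of_mem_erase hx) (Finset.mem_insert_self a B))
  have he : Q.erase B = Q'.erase B := by
    rw [← Finset.erase_insert hnotin, ← Finset.erase_insert hnotin', h]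
  constructor
  · rw [← Finset.insert_erase hB, ← Finset.insert_erase hB', he]
  · rfl

lemma addSing_inj (ha : a ∉ s) {Q Q' : Finset (Finset α)}
    (hQ : IsPartitionOn s Q) (hQ' : IsPartitionOn s Q')
    (h : insert {a} Q = insert {a} Q') : Q = Q' := by
  have h1 : ({a} : Finset α) ∉ Q := fun hx => ha (hQ.2.1 _ hx (Finset.mem_singleton_self a))
  have h2 : ({a} : Finset α) ∉ Q' := fun hx => ha (hQ'.2.1 _ hx (Finset.mem_singleton_self a))
  rw [← Finset.erase_insert h1, ← Finset.erase_insert h2, h]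

lemma sing_notmem_extend (ha : a ∉ s) {Q : Finset (Finset α)}
    (hQ : IsPartitionOn s Q) {B : Finset α} (hB : B ∈ Q) :
    ({a} : Finset α) ∉ insert (insert a B) (Q.erase B) := by
  intro h
  rcases Finset.mem_insert.mp h with h1 | h1
  · obtain ⟨b, hb⟩ := hQ.1 B hB
    have : b ∈ ({a} : Finset α) := h1 ▸ Finset.mem_insert_of_mem hb
    exact ha ((Finset.mem_singleton.mp this) ▸ hQ.2.1 B hB hb)
  · exact ha (hQ.2.1 _ (Finset.mem_of_mem_erase h1) (Finset.mem_singleton_self a))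

theorem card_partsOn (s : Finset α) : ∀ t, (partsOn s t).card = stirling2 s.card t := by
  induction s using Finset.induction_on with
  | empty =>
    intro t
    cases t with
    | zero =>
      have : partsOn (∅ : Finset α) 0 = {∅} := by
        ext P
        rw [mem_partsOn]
        constructor
        · rintro ⟨_, hc⟩
          simpa using Finset.card_eq_zero.mp hc
        · rintro hP
          simp only [Finset.mem_singleton] at hP
          subst hP
          exact ⟨⟨by simp, by simp, by simp⟩, rfl⟩
      rw [this]
      simp [stirling2]
    | succ t =>
      have : partsOn (∅ : Finset α) (t + 1) = ∅ := by
        rw [Finset.eq_empty_iff_forall_notMem]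
        intro P hP
        rw [mem_partsOn] at hP
        obtain ⟨⟨hne, hsub, _⟩, hc⟩ := hP
        have : P.Nonempty := Finset.card_pos.mp (by omega)
        obtain ⟨B, hB⟩ := this
        obtain ⟨x, hx⟩ := hne B hB
        simpa using hsub B hB hx
      rw [this]
      simp [stirling2]
  | @insert a s ha ih =>
    intro t
    rw [Finset.card_insert_of_notMem ha]
    cases t with
    | zero =>
      have : partsOn (insert a s) 0 = ∅ := by
        rw [Finset.eq_empty_iff_forall_notMem]
        intro P hP
        rw [mem_partsOn] at hP
        obtain ⟨⟨_, _, huniq⟩, hc⟩ := hP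
        obtain ⟨B, ⟨hB, _⟩, _⟩ := huniq a (Finset.mem_insert_self a s)
        rw [Finset.card_eq_zero.mp hc] at hB
        simpa using hB
      rw [this]
      simp [stirling2]
    | succ t =>
      set A := (partsOn s (t+1)).biUnion
        (fun Q => Q.image fun B => insert (insert a B) (Q.erase B)) with hA
      set Bs := (partsOn s t).image (insert {a}) with hBs
      have hcover : partsOn (insert a s) (t+1) = A ∪ Bs := by
        ext P
        constructor
        · intro hP
          rw [mem_partsOn] at hP
          rcases decomp ha hP.1 with ⟨Q, ⟨hQ, hcard⟩, rfl⟩ | ⟨Q, B, ⟨hQ, hcard⟩, hB, rfl⟩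
          · refine Finset.mem_union_right _ (Finset.mem_image.mpr ⟨Q, ?_, rfl⟩)
            rw [mem_partsOn]
            exact ⟨hQ, by omega⟩
          · refine Finset.mem_union_left _ (Finset.mem_biUnion.mpr ⟨Q, ?_, ?_⟩)
            · rw [mem_partsOn]; exact ⟨hQ, by omega⟩
            · exact Finset.mem_image.mpr ⟨B, hB, rfl⟩
        · intro hP
          rcases Finset.mem_union.mp hP with h | h
          · obtain ⟨Q, hQ, hP2⟩ := Finset.mem_biUnion.mp h
            obtain ⟨B, hB, rfl⟩ := Finset.mem_image.mp hP2
            exact extend_mem ha hQ hB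
          · obtain ⟨Q, hQ, rfl⟩ := Finset.mem_image.mp h
            exact addSing_mem ha hQ
      have hdisj : Disjoint A Bs := by
        rw [Finset.disjoint_left]
        intro P hPA hPBs
        obtain ⟨Q, hQ, hP2⟩ := Finset.mem_biUnion.mp hPA
        obtain ⟨B, hB, rfl⟩ := Finset.mem_image.mp hP2
        obtain ⟨Q', hQ', hP3⟩ := Finset.mem_image.mp hPBs
        exact sing_notmem_extend ha (mem_partsOn.mp hQ).1 hB (hP3 ▸ Finset.mem_insert_self _ _)
      have hcardA : A.card = (t + 1) * stirling2 s.card (t+1) := by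
        rw [hA, Finset.card_biUnion]
        · have : ∀ Q ∈ partsOn s (t+1),
              (Q.image fun B => insert (insert a B) (Q.erase B)).card = t + 1 := by
            intro Q hQ
            rw [Finset.card_image_of_injOn, (mem_partsOn.mp hQ).2]
            intro B hB B' hB' h
            exact (extend_inj ha (mem_partsOn.mp hQ).1 (mem_partsOn.mp hQ).1 hB hB' h).2
          rw [Finset.sum_congr rfl this, Finset.sum_const, ih (t+1), smul_eq_mul, mul_comm]
        · intro Q hQ Q' hQ' hne
          rw [Function.onFun, Finset.disjoint_left]
          intro P hP hP'
          obtain ⟨B, hB, rfl⟩ := Finset.mem_image.mp hP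
          obtain ⟨B', hB', h⟩ := Finset.mem_image.mp hP'
          exact hne (extend_inj ha (mem_partsOn.mp hQ).1 (mem_partsOn.mp hQ').1 hB hB' h.symm).1
      have hcardB : Bs.card = stirling2 s.card t := by
        rw [hBs, Finset.card_image_of_injOn, ih t]
        intro Q hQ Q' hQ' h
        exact addSing_inj ha (mem_partsOn.mp hQ).1 (mem_partsOn.mp hQ').1 h
      rw [hcover, Finset.card_union_of_disjoint hdisj, hcardA, hcardB]
      rfl
end Stirling

lemma card_cellsOfRowLens (w : List ℕ) : (YoungDiagram.cellsOfRowLens w).card = w.sum := by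
  induction w with
  | nil => simp [YoungDiagram.cellsOfRowLens]
  | cons x xs ih =>
    rw [YoungDiagram.cellsOfRowLens, Finset.card_union_of_disjoint, Finset.card_map, ih]
    · simp [List.sum_cons]
    · rw [Finset.disjoint_left]
      rintro ⟨i, j⟩ h1 h2
      simp only [Finset.mem_product, Finset.mem_singleton] at h1
      simp only [Finset.mem_map, Function.Embedding.prodMap, Function.Embedding.coeFn_mk,
        Prod.exists, Prod.map] at h2
      obtain ⟨p, q, _, hpq⟩ := h2
      have : i = p.succ := by
        have := congrArg Prod.fst hpq
        simpa using this.symm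
      omega

section Shape
variable {n : ℕ} (lam : Nat.Partition n)

lemma sort_sum : (lam.parts.sort (· ≥ ·)).sum = n := by
  rw [← Multiset.sum_coe, Multiset.sort_eq]
  exact lam.parts_sum

lemma shape_cells_card : (shapeOf lam).cells.card = n := by
  rw [shapeOf]
  show (YoungDiagram.cellsOfRowLens _).card = n
  rw [card_cellsOfRowLens, sort_sum]

lemma mem_shape_zero (hn : 0 < n) (j : ℕ) :
    ((0, j) ∈ shapeOf lam) ↔ j < (lam.parts.sort (· ≥ ·)).headI := by
  have hne : lam.parts.sort (· ≥ ·) ≠ [] := by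
    intro h
    have h2 := sort_sum lam
    rw [h] at h2
    simp at h2
    omega
  obtain ⟨c, rest, hw⟩ := List.exists_cons_of_ne_nil hne
  rw [shapeOf, YoungDiagram.mem_ofRowLens]
  simp only [hw, List.headI_cons, List.length_cons, List.getElem_cons_zero]
  constructor
  · rintro ⟨_, h2⟩; exact h2
  · intro h; exact ⟨Nat.succ_pos _, h⟩

end Shape

section Skew
variable {n m : ℕ} (lam : Nat.Partition n)

lemma row0_filter (hn : 0 < n) (hhead : (lam.parts.sort (· ≥ ·)).headI = n - m) :
    (shapeOf lam).cells.filter (fun c => c.1 = 0) = ({0} : Finset ℕ) ×ˢ Finset.range (n - m) := by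
  ext ⟨i, j⟩
  simp only [Finset.mem_filter, Finset.mem_product, Finset.mem_singleton, Finset.mem_range,
    YoungDiagram.mem_cells]
  constructor
  · rintro ⟨h1, rfl⟩
    exact ⟨rfl, by rwa [mem_shape_zero lam hn, hhead] at h1⟩
  · rintro ⟨rfl, h2⟩
    exact ⟨by rwa [mem_shape_zero lam hn, hhead], rfl⟩

lemma low_card (hn : 0 < n) (hm : m ≤ n)
    (hhead : (lam.parts.sort (· ≥ ·)).headI = n - m) :
    ((shapeOf lam).cells.filter (fun c => ¬c.1 = 0)).card = m := by
  have h1 := Finset.card_filter_add_card_filter_not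
    (s := (shapeOf lam).cells) (p := fun c => c.1 = 0)
  rw [row0_filter lam hn hhead, shape_cells_card] at h1
  rw [Finset.card_product] at h1
  simp only [Finset.card_singleton, Finset.card_range, one_mul] at h1
  omega

lemma skew_eq (hn : 0 < n) (hhead : (lam.parts.sort (· ≥ ·)).headI = n - m) (t : ℕ) :
    skewCells lam t = (({0} : Finset ℕ) ×ˢ Finset.Ico (n - t) (n - m)) ∪
      ((shapeOf lam).cells.filter (fun c => ¬c.1 = 0)) := by
  ext ⟨i, j⟩
  simp only [skewCells, Finset.mem_filter, Finset.mem_union, Finset.mem_product,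
    Finset.mem_singleton, Finset.mem_Ico, YoungDiagram.mem_cells]
  by_cases hi : i = 0
  · subst hi
    rw [mem_shape_zero lam hn, hhead]
    constructor
    · rintro ⟨h1, h2⟩
      exact Or.inl ⟨rfl, by omega, h1⟩
    · rintro (⟨_, h2, h3⟩ | ⟨h1, h2⟩)
      · exact ⟨h3, by omega⟩
      · exact absurd rfl h2
  · constructor
    · rintro ⟨h1, _⟩
      exact Or.inr ⟨h1, hi⟩
    · rintro (⟨h1, _⟩ | ⟨h1, _⟩)
      · exact absurd h1 hi
      · exact ⟨h1, by omega⟩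
  -- note: in the `¬(i=0 ∧ j < n-t)` positions omega closes using hi

lemma skew_disjoint (t : ℕ) :
    Disjoint (({0} : Finset ℕ) ×ˢ Finset.Ico (n - t) (n - m))
      ((shapeOf lam).cells.filter (fun c => ¬c.1 = 0)) := by
  rw [Finset.disjoint_left]
  rintro ⟨i, j⟩ h1 h2
  simp only [Finset.mem_product, Finset.mem_singleton] at h1
  simp only [Finset.mem_filter] at h2
  exact h2.2 h1.1

lemma skew_card (hn : 0 < n) (hm : m ≤ n)
    (hhead : (lam.parts.sort (· ≥ ·)).headI = n - m) (t : ℕ) :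
    (skewCells lam t).card = ((n - m) - (n - t)) + m := by
  rw [skew_eq lam hn hhead t, Finset.card_union_of_disjoint (skew_disjoint lam t),
    Finset.card_product, low_card lam hn hm hhead]
  simp [Nat.card_Ico]

end Skew

lemma strictMonoOn_bijOn_eqOn {α β : Type*} [LinearOrder α] [LinearOrder β]
    {A : Finset α} {C : Finset β} {f g : α → β}
    (hf : Set.BijOn f ↑A ↑C) (hg : Set.BijOn g ↑A ↑C)
    (hfm : StrictMonoOn f ↑A) (hgm : StrictMonoOn g ↑A) : Set.EqOn f g ↑A := by
  have hcard : C.card = A.card := by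
    have h1 : f '' ↑A = ↑C := hf.image_eq
    have h2 := Set.ncard_image_of_injOn hf.injOn
    rw [h1, Set.ncard_coe_finset, Set.ncard_coe_finset] at h2
    omega
  set e := A.orderEmbOfFin rfl with he
  have key : ∀ h : α → β, Set.BijOn h ↑A ↑C → StrictMonoOn h ↑A →
      (fun i => h (e i)) = ⇑(C.orderEmbOfFin hcard) := by
    intro h hb hm
    apply Finset.orderEmbOfFin_unique hcard
    · intro i
      exact hb.mapsTo (Finset.orderEmbOfFin_mem A rfl i)
    · intro i j hij
      exact hm (Finset.orderEmbOfFin_mem A rfl i) (Finset.orderEmbOfFin_mem A rfl j)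
        (e.strictMono hij)
  intro a ha
  have : a ∈ Set.range e := by
    rw [Finset.range_orderEmbOfFin]
    exact ha
  obtain ⟨i, rfl⟩ := this
  have k1 := congrFun (key f hf hfm) i
  have k2 := congrFun (key g hg hgm) i
  rw [k1, k2]

lemma eqOn_of_mono_bijOn {γ : Type*} [Nonempty γ] (μ : γ → ℕ) {S : Finset γ}
    (hμ : Set.InjOn μ ↑S) {C : Finset ℕ} {f g : γ → ℕ}
    (hf : Set.BijOn f ↑S ↑C) (hg : Set.BijOn g ↑S ↑C)
    (hfm : ∀ x ∈ S, ∀ y ∈ S, μ x < μ y → f x < f y)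
    (hgm : ∀ x ∈ S, ∀ y ∈ S, μ x < μ y → g x < g y) :
    ∀ x ∈ S, f x = g x := by
  classical
  set A := S.image μ with hA
  have hAco : (↑A : Set ℕ) = μ '' ↑S := by rw [hA, Finset.coe_image]
  have hinv : ∀ x ∈ S, Function.invFunOn μ ↑S (μ x) = x := fun x hx =>
    hμ.leftInvOn_invFunOn hx
  have key : ∀ h : γ → ℕ, Set.BijOn h ↑S ↑C →
      (∀ x ∈ S, ∀ y ∈ S, μ x < μ y → h x < h y) →
      Set.BijOn (fun b => h (Function.invFunOn μ ↑S b)) ↑A ↑C ∧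
      StrictMonoOn (fun b => h (Function.invFunOn μ ↑S b)) ↑A := by
    intro h hb hm
    have hmem : ∀ b ∈ A, Function.invFunOn μ ↑S b ∈ S ∧ μ (Function.invFunOn μ ↑S b) = b := by
      intro b hbA
      obtain ⟨x, hx, rfl⟩ := Finset.mem_image.mp hbA
      rw [hinv x hx]
      exact ⟨hx, rfl⟩
    refine ⟨⟨?_, ?_, ?_⟩, ?_⟩
    · intro b hbA
      exact hb.mapsTo (hmem b hbA).1
    · intro b hb1 b' hb1' heq
      have h1 := hmem b hb1
      have h2 := hmem b' hb1'
      have := hb.injOn h1.1 h2.1 heq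
      rw [← h1.2, ← h2.2, this]
    · intro c hc
      obtain ⟨x, hx, rfl⟩ := hb.surjOn hc
      refine ⟨μ x, by rw [hAco]; exact Set.mem_image_of_mem μ hx, ?_⟩
      show h (Function.invFunOn μ ↑S (μ x)) = h x
      rw [hinv x hx]
    · intro b hb1 b' hb1' hlt
      have h1 := hmem b hb1
      have h2 := hmem b' hb1'
      exact hm _ h1.1 _ h2.1 (by rw [h1.2, h2.2]; exact hlt)
  obtain ⟨hfb, hfm'⟩ := key f hf hfm
  obtain ⟨hgb, hgm'⟩ := key g hg hgm
  have := strictMonoOn_bijOn_eqOn hfb hgb hfm' hgm'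
  intro x hx
  have hmx : μ x ∈ A := Finset.mem_image_of_mem μ hx
  have h1 := this hmx
  simp only at h1
  rw [hinv x hx] at h1
  exact h1

lemma exists_mono_bijOn {γ : Type*} (μ : γ → ℕ) {S : Finset γ}
    (hμ : Set.InjOn μ ↑S) {C : Finset ℕ} (hcard : C.card = S.card) :
    ∃ f : γ → ℕ, Set.BijOn f ↑S ↑C ∧ ∀ x ∈ S, ∀ y ∈ S, μ x < μ y → f x < f y := by
  classical
  set A := S.image μ with hA
  have hAcard : A.card = S.card := Finset.card_image_of_injOn hμ
  set iso := A.orderIsoOfFin hAcard with hiso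
  set emb := C.orderEmbOfFin hcard with hemb
  refine ⟨fun x => if h : x ∈ S then emb (iso.symm ⟨μ x, Finset.mem_image_of_mem μ h⟩) else 0,
    ⟨?_, ?_, ?_⟩, ?_⟩
  · intro x hx
    rw [Finset.mem_coe] at hx
    simp only [dif_pos hx]
    exact Finset.orderEmbOfFin_mem C hcard _
  · intro x hx y hy hxy
    rw [Finset.mem_coe] at hx hy
    simp only [dif_pos hx, dif_pos hy] at hxy
    have h1 := emb.injective hxy
    have h2 := iso.symm.injective h1
    have h3 : μ x = μ y := congrArg Subtype.val h2
    exact hμ hx hy h3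
  · intro c hc
    have : c ∈ Set.range emb := by
      rw [hemb, Finset.range_orderEmbOfFin]
      exact hc
    obtain ⟨i, rfl⟩ := this
    obtain ⟨x, hx, hμx⟩ := Finset.mem_image.mp (iso i).2
    refine ⟨x, hx, ?_⟩
    simp only [dif_pos hx]
    congr 1
    have hve : (⟨μ x, Finset.mem_image_of_mem μ hx⟩ : {b // b ∈ A}) = iso i :=
      Subtype.ext hμx
    rw [hve]
    exact iso.symm_apply_apply i
  · intro x hx y hy hxy
    simp only [dif_pos hx, dif_pos hy]
    apply emb.strictMono
    rw [OrderIso.lt_iff_lt]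
    exact Subtype.mk_lt_mk.mpr hxy
section CardFill

variable {k : ℕ}

lemma blockMax_inj {P : Finset (Finset (Fin k))} (hP : IsSetPartition P) :
    Function.Injective (fun B : {B // B ∈ P} => blockMax B.1) := by
  intro B B' h
  simp only at h
  obtain ⟨x, hx, hxs⟩ := Finset.exists_mem_eq_sup B.1 (hP.1 B.1 B.2) (fun x : Fin k => (x : ℕ) + 1)
  obtain ⟨y, hy, hys⟩ := Finset.exists_mem_eq_sup B'.1 (hP.1 B'.1 B'.2) (fun x : Fin k => (x : ℕ) + 1)
  rw [blockMax, blockMax, hxs, hys] at h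
  have hxy : x = y := Fin.ext (by omega)
  subst hxy
  obtain ⟨Bx, _, hux⟩ := hP.2 x
  exact Subtype.ext ((hux B.1 ⟨B.2, hx⟩).trans (hux B'.1 ⟨B'.2, hy⟩).symm)

lemma partition_card_le {P : Finset (Finset (Fin k))} (hP : IsSetPartition P) :
    P.card ≤ k := by
  classical
  have hdisj : ∀ B ∈ P, ∀ B' ∈ P, B ≠ B' → Disjoint B B' := by
    intro B hB B' hB' hne
    rw [Finset.disjoint_left]
    intro x hx hx'
    obtain ⟨Bx, _, hux⟩ := hP.2 x
    exact hne ((hux B ⟨hB, hx⟩).trans (hux B' ⟨hB', hx'⟩).symm)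
  have h1 : (P.biUnion id).card = ∑ B ∈ P, B.card := Finset.card_biUnion hdisj
  have h2 : P.card ≤ ∑ B ∈ P, B.card := by
    calc P.card = ∑ _B ∈ P, 1 := by simp
      _ ≤ ∑ B ∈ P, B.card :=
        Finset.sum_le_sum (fun B hB => Finset.card_pos.mpr (hP.1 B hB))
  have h3 : (P.biUnion id).card ≤ k := by
    have := Finset.card_le_univ (P.biUnion id)
    simpa using this
  omega

end CardFill

abbrev FillT {k n : ℕ} (lam : Nat.Partition n) (P : Finset (Finset (Fin k))) : Type :=
  {T : {B : Finset (Fin k) // B ∈ P} → ℕ × ℕ //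
    Set.BijOn T Set.univ ↑(skewCells lam P.card) ∧
    ∀ B B' : {B : Finset (Fin k) // B ∈ P},
      (T B).1 = 0 → (T B').1 = 0 → (T B).2 < (T B').2 →
        blockMax B.1 < blockMax B'.1}

lemma card_fill (k n m : ℕ) (hk : 1 ≤ k) (hn : 2 * k ≤ n) (hm : m ≤ k)
    (lam : Nat.Partition n) (hlam : (lam.parts.sort (· ≥ ·)).headI = n - m)
    (P : Finset (Finset (Fin k))) (hP : IsSetPartition P) :
    Nat.card {T : {B : Finset (Fin k) // B ∈ P} → ℕ × ℕ //
        Set.BijOn T Set.univ ↑(skewCells lam P.card) ∧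
        ∀ B B' : {B : Finset (Fin k) // B ∈ P},
          (T B).1 = 0 → (T B').1 = 0 → (T B).2 < (T B').2 →
            blockMax B.1 < blockMax B'.1} =
      (P.card.choose m) * m.factorial := by
  classical
  have hn0 : 0 < n := by omega
  have hmn : m ≤ n := by omega
  have htk : P.card ≤ k := partition_card_le hP
  have htn : P.card ≤ n := by omega
  set low := (shapeOf lam).cells.filter (fun c => ¬c.1 = 0) with hlowdef
  set r0 := (({0} : Finset ℕ) ×ˢ Finset.Ico (n - P.card) (n - m)) with hr0def
  have hseq : skewCells lam P.card = r0 ∪ low := skew_eq lam hn0 hlam P.card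
  have hlowcard : low.card = m := low_card lam hn0 hmn hlam
  have hlowsub : low ⊆ skewCells lam P.card := hseq ▸ Finset.subset_union_right
  have hr0mem : ∀ c : ℕ × ℕ, c ∈ r0 ↔ c.1 = 0 ∧ c.2 ∈ Finset.Ico (n - P.card) (n - m) := by
    intro c
    rw [hr0def, Finset.mem_product, Finset.mem_singleton]
  have hlow_ne0 : ∀ c ∈ low, ¬c.1 = 0 := by
    intro c hc
    exact (Finset.mem_filter.mp hc).2
  have hsplit0 : ∀ c ∈ skewCells lam P.card, c.1 = 0 → c ∈ r0 := by
    intro c hc h0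
    rw [hseq, Finset.mem_union] at hc
    rcases hc with h | h
    · exact h
    · exact absurd h0 (hlow_ne0 c h)
  have hsplit1 : ∀ c ∈ skewCells lam P.card, ¬c.1 = 0 → c ∈ low := by
    intro c hc h0
    rw [hseq, Finset.mem_union] at hc
    rcases hc with h | h
    · exact absurd ((hr0mem c).mp h).1 h0
    · exact h
  set μ : {B // B ∈ P} → ℕ := fun B => blockMax B.1 with hμdef
  have hμ : Function.Injective μ := blockMax_inj hP
  have hne : Nonempty {B // B ∈ P} := by
    obtain ⟨B, hB, _⟩ := (hP.2 ⟨0, hk⟩).exists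
    exact ⟨⟨B, hB⟩⟩
  have hblocks_card : Fintype.card {B // B ∈ P} = P.card := Fintype.card_coe P
  have hlowT_card : Fintype.card {c // c ∈ low} = m := by
    rw [Fintype.card_coe, hlowcard]
  -- the equivalence with injections
  have main : Nat.card (FillT lam P) =
      Nat.card {h : {c // c ∈ low} → {B // B ∈ P} // Function.Injective h} := by
    have hbijT : ∀ T : FillT lam P,
        Function.Bijective (fun B => (⟨T.1 B, Finset.mem_coe.mp
          (T.2.1.mapsTo (Set.mem_univ B))⟩ : {c // c ∈ skewCells lam P.card})) := by
      intro T
      constructor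
      · intro a b hab
        exact T.2.1.injOn (Set.mem_univ a) (Set.mem_univ b) (congrArg Subtype.val hab)
      · intro c
        obtain ⟨B, _, hB⟩ := T.2.1.surjOn (Finset.mem_coe.mpr c.2)
        exact ⟨B, Subtype.ext hB⟩
    set eT : ∀ _T : FillT lam P,
        {B // B ∈ P} ≃ {c // c ∈ skewCells lam P.card} :=
      fun T => Equiv.ofBijective _ (hbijT T) with heTdef
    have hT_of_symm : ∀ (T : FillT lam P) (x : {c // c ∈ skewCells lam P.card}),
        T.1 ((eT T).symm x) = x.1 := by
      intro T x
      exact congrArg Subtype.val ((eT T).apply_symm_apply x)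
    have hΦinj : ∀ T : FillT lam P, Function.Injective
        (fun c : {c // c ∈ low} => (eT T).symm ⟨c.1, hlowsub c.2⟩) := by
      intro T c c' hcc
      have h2 := (eT T).symm.injective hcc
      exact Subtype.ext (congrArg (Subtype.val (p := fun c => c ∈ skewCells lam P.card)) h2)
    have hmemiff : ∀ (T : FillT lam P) (B : {B // B ∈ P}),
        (¬∃ c : {c // c ∈ low}, (eT T).symm ⟨c.1, hlowsub c.2⟩ = B) ↔ (T.1 B).1 = 0 := by
      intro T B
      constructor
      · intro hnc
        by_contra h0
        have h1 : T.1 B ∈ low :=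
          hsplit1 _ (Finset.mem_coe.mp (T.2.1.mapsTo (Set.mem_univ B))) h0
        refine hnc ⟨⟨T.1 B, h1⟩, ?_⟩
        rw [Equiv.symm_apply_eq]
        exact Subtype.ext rfl
      · intro h0
        rintro ⟨c, hc⟩
        have h2 := hT_of_symm T ⟨c.1, hlowsub c.2⟩
        rw [hc] at h2
        exact hlow_ne0 c.1 c.2 (h2 ▸ h0)
    apply Nat.card_eq_of_bijective
      (fun T : FillT lam P => (⟨fun c : {c // c ∈ low} => (eT T).symm ⟨c.1, hlowsub c.2⟩, hΦinj T⟩ :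
        {h : {c // c ∈ low} → {B // B ∈ P} // Function.Injective h}))
    constructor
    · -- injectivity
      intro T T' hTT
      have hfun := congrArg Subtype.val hTT
      simp only at hfun
      apply Subtype.ext
      funext B
      by_cases hb : ∃ c : {c // c ∈ low}, (eT T).symm ⟨c.1, hlowsub c.2⟩ = B
      · obtain ⟨c, hc⟩ := hb
        have e1 : T.1 B = c.1 := by rw [← hc]; exact hT_of_symm T _
        have hc' : (eT T').symm ⟨c.1, hlowsub c.2⟩ = B := by
          rw [← congrFun hfun c]; exact hc
        have e2 : T'.1 B = c.1 := by rw [← hc']; exact hT_of_symm T' _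
        rw [e1, e2]
      · set Sc := Finset.univ.filter (fun B' : {B // B ∈ P} =>
          ¬∃ c : {c // c ∈ low}, (eT T).symm ⟨c.1, hlowsub c.2⟩ = B') with hScdef
        have hScmem : ∀ B', B' ∈ Sc ↔
            ¬∃ c : {c // c ∈ low}, (eT T).symm ⟨c.1, hlowsub c.2⟩ = B' := by
          intro B'
          simp [hScdef]
        have hScmem' : ∀ B', B' ∈ Sc ↔
            ¬∃ c : {c // c ∈ low}, (eT T').symm ⟨c.1, hlowsub c.2⟩ = B' := by
          intro B'
          rw [hScmem]
          constructor
          · rintro h1 ⟨c, hcc⟩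
            exact h1 ⟨c, by rw [congrFun hfun c]; exact hcc⟩
          · rintro h1 ⟨c, hcc⟩
            exact h1 ⟨c, by rw [← congrFun hfun c]; exact hcc⟩
        have hbij : ∀ Tt : FillT lam P, (∀ B' : {B // B ∈ P}, B' ∈ Sc ↔
            ¬∃ c : {c // c ∈ low}, (eT Tt).symm ⟨c.1, hlowsub c.2⟩ = B') →
            Set.BijOn (fun B' => (Tt.1 B').2) ↑Sc ↑(Finset.Ico (n - P.card) (n - m)) ∧
            (∀ x ∈ Sc, ∀ y ∈ Sc, blockMax x.1 < blockMax y.1 →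
              (Tt.1 x).2 < (Tt.1 y).2) := by
          intro Tt hmem
          have h0 : ∀ B' ∈ Sc, (Tt.1 B').1 = 0 :=
            fun B' hB' => (hmemiff Tt B').mp ((hmem B').mp hB')
          have hr : ∀ B' ∈ Sc, Tt.1 B' ∈ r0 := fun B' hB' =>
            hsplit0 _ (Finset.mem_coe.mp (Tt.2.1.mapsTo (Set.mem_univ B'))) (h0 B' hB')
          refine ⟨⟨?_, ?_, ?_⟩, ?_⟩
          · intro B' hB'
            exact Finset.mem_coe.mpr ((hr0mem _).mp (hr B' (Finset.mem_coe.mp hB'))).2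
          · intro x hx y hy hxy
            refine Tt.2.1.injOn (Set.mem_univ x) (Set.mem_univ y) (Prod.ext ?_ hxy)
            rw [h0 x (Finset.mem_coe.mp hx), h0 y (Finset.mem_coe.mp hy)]
          · intro j hj
            have hj0 : ((0 : ℕ), j) ∈ r0 := (hr0mem _).mpr ⟨rfl, Finset.mem_coe.mp hj⟩
            have hj1 : ((0 : ℕ), j) ∈ skewCells lam P.card := by
              rw [hseq]
              exact Finset.mem_union_left _ hj0
            obtain ⟨B₁, _, hB₁⟩ := Tt.2.1.surjOn (Finset.mem_coe.mpr hj1)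
            have hB₁Sc : B₁ ∈ Sc := (hmem B₁).mpr ((hmemiff Tt B₁).mpr
              (congrArg Prod.fst hB₁))
            exact ⟨B₁, Finset.mem_coe.mpr hB₁Sc, congrArg Prod.snd hB₁⟩
          · intro x hx y hy hxy
            rcases lt_trichotomy (Tt.1 x).2 (Tt.1 y).2 with hlt | heq | hgt
            · exact hlt
            · have : Tt.1 x = Tt.1 y := Prod.ext (by rw [h0 x hx, h0 y hy]) heq
              have := Tt.2.1.injOn (Set.mem_univ x) (Set.mem_univ y) this
              rw [this] at hxy
              exact absurd hxy (lt_irrefl _)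
            · have := Tt.2.2 y x (h0 y hy) (h0 x hx) hgt
              omega
        obtain ⟨hb1, hm1⟩ := hbij T hScmem
        obtain ⟨hb2, hm2⟩ := hbij T' hScmem'
        have hBSc : B ∈ Sc := (hScmem B).mpr hb
        have heq2 := eqOn_of_mono_bijOn (fun B : {B // B ∈ P} => blockMax B.1)
          (hμ.injOn) hb1 hb2 hm1 hm2 B hBSc
        refine Prod.ext ?_ heq2
        rw [(hmemiff T B).mp hb, (hmemiff T' B).mp ((hScmem' B).mp hBSc)]
    · -- surjectivity
      rintro ⟨h, hinj⟩
      set Simg := Finset.univ.image h with hSimgdef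
      set Sc := Finset.univ \ Simg with hScdef
      have hSc_iff : ∀ B, B ∈ Sc ↔ ¬∃ c : {c // c ∈ low}, h c = B := by
        intro B
        simp [hScdef, hSimgdef]
      have hunivB : (Finset.univ : Finset {B // B ∈ P}).card = P.card := by simp
      have hunivc : (Finset.univ : Finset {c // c ∈ low}).card = m := by simp [hlowcard]
      have hSimg_card : Simg.card = m := by
        rw [hSimgdef, Finset.card_image_of_injective _ hinj, hunivc]
      have hmt : m ≤ P.card := by
        have h1 := Finset.card_le_univ Simg
        rw [hSimg_card] at h1
        exact h1.trans (le_of_eq hunivB)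
      have hSc_card : Sc.card = P.card - m := by
        rw [hScdef, Finset.card_sdiff_of_subset (Finset.subset_univ _), hunivB, hSimg_card]
      have hC_card : (Finset.Ico (n - P.card) (n - m)).card = Sc.card := by
        rw [Nat.card_Ico, hSc_card]
        omega
      obtain ⟨f0, hf0b, hf0m⟩ := exists_mono_bijOn
        (fun B : {B // B ∈ P} => blockMax B.1) (hμ.injOn) hC_card
      set T := fun B : {B // B ∈ P} => if hb : ∃ c : {c // c ∈ low}, h c = B
        then ((hb.choose : {c // c ∈ low}).1 : ℕ × ℕ) else ((0 : ℕ), f0 B) with hTdef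
      have hTpos : ∀ B (hb : ∃ c : {c // c ∈ low}, h c = B), T B = (hb.choose).1 := by
        intro B hb
        simp only [hTdef]
        rw [dif_pos hb]
      have hTim : ∀ c : {c // c ∈ low}, T (h c) = c.1 := by
        intro c
        have hb : ∃ c' : {c // c ∈ low}, h c' = h c := ⟨c, rfl⟩
        rw [hTpos (h c) hb]
        exact congrArg Subtype.val (hinj hb.choose_spec)
      have hTSc : ∀ B, B ∈ Sc → T B = ((0 : ℕ), f0 B) := by
        intro B hB
        simp only [hTdef]
        rw [dif_neg ((hSc_iff B).mp hB)]
      have hTlow : ∀ B (hb : ∃ c : {c // c ∈ low}, h c = B), T B ∈ low := by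
        intro B hb
        rw [hTpos B hb]
        exact (hb.choose).2
      have hmaps : Set.MapsTo T Set.univ ↑(skewCells lam P.card) := by
        intro B _
        by_cases hb : ∃ c : {c // c ∈ low}, h c = B
        · exact Finset.mem_coe.mpr (hlowsub (hTlow B hb))
        · have hBSc : B ∈ Sc := (hSc_iff B).mpr hb
          rw [hTSc B hBSc]
          refine Finset.mem_coe.mpr ?_
          rw [hseq]
          refine Finset.mem_union_left _ ((hr0mem _).mpr ⟨rfl, ?_⟩)
          exact Finset.mem_coe.mp (hf0b.mapsTo (Finset.mem_coe.mpr hBSc))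
      have hinjT : Set.InjOn T Set.univ := by
        intro a _ b _ hab
        by_cases ha : ∃ c : {c // c ∈ low}, h c = a
          <;> by_cases hb2 : ∃ c : {c // c ∈ low}, h c = b
        · rw [hTpos a ha, hTpos b hb2] at hab
          have hch : ha.choose = hb2.choose := Subtype.ext hab
          rw [← ha.choose_spec, ← hb2.choose_spec, hch]
        · have e1 := hTlow a ha
          have hbSc := (hSc_iff b).mpr hb2
          rw [hTSc b hbSc] at hab
          exact absurd (by rw [hab]) (hlow_ne0 _ e1)
        · have e1 := hTlow b hb2
          have haSc := (hSc_iff a).mpr ha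
          rw [hTSc a haSc] at hab
          exact absurd (by rw [← hab]) (hlow_ne0 _ e1)
        · have haSc := (hSc_iff a).mpr ha
          have hbSc := (hSc_iff b).mpr hb2
          rw [hTSc a haSc, hTSc b hbSc] at hab
          exact hf0b.injOn (Finset.mem_coe.mpr haSc) (Finset.mem_coe.mpr hbSc)
            (congrArg Prod.snd hab)
      have hsurj : Set.SurjOn T Set.univ ↑(skewCells lam P.card) := by
        intro c hc
        rw [Finset.mem_coe, hseq, Finset.mem_union] at hc
        rcases hc with hc | hc
        · obtain ⟨h0, hIco⟩ := (hr0mem c).mp hc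
          obtain ⟨B, hBSc, hfB⟩ := hf0b.surjOn (Finset.mem_coe.mpr hIco)
          refine ⟨B, Set.mem_univ B, ?_⟩
          rw [hTSc B (Finset.mem_coe.mp hBSc)]
          exact Prod.ext h0.symm hfB
        · exact ⟨h ⟨c, hc⟩, Set.mem_univ _, hTim ⟨c, hc⟩⟩
      have hincr : ∀ B B' : {B // B ∈ P}, (T B).1 = 0 → (T B').1 = 0 →
          (T B).2 < (T B').2 → blockMax B.1 < blockMax B'.1 := by
        intro B B' h1 h2 hlt
        have hBSc : B ∈ Sc := by
          by_contra hcon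
          have hb : ∃ c : {c // c ∈ low}, h c = B := by
            by_contra hb
            exact hcon ((hSc_iff B).mpr hb)
          exact hlow_ne0 _ (hTlow B hb) h1
        have hBSc' : B' ∈ Sc := by
          by_contra hcon
          have hb : ∃ c : {c // c ∈ low}, h c = B' := by
            by_contra hb
            exact hcon ((hSc_iff B').mpr hb)
          exact hlow_ne0 _ (hTlow B' hb) h2
        rw [hTSc B hBSc, hTSc B' hBSc'] at hlt
        have hlt' : f0 B < f0 B' := hlt
        rcases lt_trichotomy (blockMax B.1) (blockMax B'.1) with hx | hx | hx
        · exact hx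
        · have hBB : B = B' := hμ hx
          rw [hBB] at hlt'
          exact absurd hlt' (lt_irrefl _)
        · have h3 := hf0m B' hBSc' B hBSc hx
          omega
      refine ⟨⟨T, ⟨hmaps, hinjT, hsurj⟩, hincr⟩, ?_⟩
      apply Subtype.ext
      funext c
      show (eT ⟨T, ⟨hmaps, hinjT, hsurj⟩, hincr⟩).symm ⟨c.1, hlowsub c.2⟩ = h c
      rw [Equiv.symm_apply_eq]
      exact Subtype.ext (hTim c).symm
  rw [main, Nat.card_congr (Equiv.subtypeInjectiveEquivEmbedding _ _),
    Nat.card_eq_fintype_card, Fintype.card_embedding_eq, hblocks_card, hlowT_card,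
    Nat.descFactorial_eq_factorial_mul_choose, mul_comm]

open scoped Classical in
lemma card_setPartitions (k t : ℕ) :
    (Finset.univ.filter fun P : Finset (Finset (Fin k)) =>
      IsSetPartition P ∧ P.card = t).card = stirling2 k t := by
  classical
  have h1 : (Finset.univ.filter fun P : Finset (Finset (Fin k)) =>
      IsSetPartition P ∧ P.card = t) = partsOn Finset.univ t := by
    ext P
    rw [Finset.mem_filter, mem_partsOn]
    constructor
    · rintro ⟨_, ⟨hne, huniq⟩, hcard⟩
      exact ⟨⟨hne, fun B _ => Finset.subset_univ B, fun x _ => huniq x⟩, hcard⟩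
    · rintro ⟨⟨hne, _, huniq⟩, hcard⟩
      exact ⟨Finset.mem_univ P, ⟨hne, fun x => huniq x (Finset.mem_univ x)⟩, hcard⟩
  rw [h1, card_partsOn]
  congr 1
  rw [Finset.card_univ, Fintype.card_fin]


/-- For `k ≥ 1`, `n ≥ 2k`, and `λ ⊢ n` with `|λ*| = m ≤ k` (`λ*` is `λ` minus its first
row, so the first part of `λ` is `n - m`): the number of set-partition tableaux of shape
`λ` with content a set partition of `{1,…,k}` and increasing first row — i.e. pairs of a
set partition `P` of `Fin k` and a bijective filling `T` of the cells of `λ/[n - |P|]`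
by the blocks of `P` whose first row increases left to right in max-entry order — equals
`(∑_t S(k,t) C(t,m)) ⬝ m!`. -/
theorem card_SPTbar (k n m : ℕ) (hk : 1 ≤ k) (hn : 2 * k ≤ n) (hm : m ≤ k)
    (lam : Nat.Partition n) (hlam : (lam.parts.sort (· ≥ ·)).headI = n - m) :
    Nat.card
        ((P : {P : Finset (Finset (Fin k)) // IsSetPartition P}) ×
          {T : {B : Finset (Fin k) // B ∈ P.1} → ℕ × ℕ //
            Set.BijOn T Set.univ ↑(skewCells lam P.1.card) ∧
            ∀ B B' : {B : Finset (Fin k) // B ∈ P.1},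
              (T B).1 = 0 → (T B').1 = 0 → (T B).2 < (T B').2 →
                blockMax B.1 < blockMax B'.1}) =
      (∑ t ∈ Finset.range (k + 1), stirling2 k t * t.choose m) * m.factorial := by
  classical
  have hfinite : ∀ P : {P : Finset (Finset (Fin k)) // IsSetPartition P},
      Finite (FillT lam P.1) := by
    intro P
    apply Finite.of_injective (fun T : FillT lam P.1 =>
      (fun B => (⟨T.1 B, Finset.mem_coe.mp (T.2.1.mapsTo (Set.mem_univ B))⟩ :
        {c // c ∈ skewCells lam P.1.card})))
    intro T T' h
    apply Subtype.ext
    funext B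
    exact congrArg Subtype.val (congrFun h B)
  letI : ∀ P : {P : Finset (Finset (Fin k)) // IsSetPartition P},
      Fintype (FillT lam P.1) := fun P => @Fintype.ofFinite _ (hfinite P)
  rw [Nat.card_eq_fintype_card, Fintype.card_sigma]
  have hcf : ∀ P : {P : Finset (Finset (Fin k)) // IsSetPartition P},
      Fintype.card (FillT lam P.1) = (P.1.card.choose m) * m.factorial := by
    intro P
    rw [← Nat.card_eq_fintype_card]
    exact card_fill k n m hk hn hm lam hlam P.1 P.2
  rw [Finset.sum_congr rfl (fun P _ => hcf P)]
  have hmaps : ∀ P ∈ (Finset.univ : Finset {P : Finset (Finset (Fin k)) // IsSetPartition P}),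
      P.1.card ∈ Finset.range (k + 1) := by
    intro P _
    rw [Finset.mem_range]
    have := partition_card_le P.2
    omega
  rw [← Finset.sum_fiberwise_of_maps_to hmaps
    (fun P : {P : Finset (Finset (Fin k)) // IsSetPartition P} => (P.1.card.choose m) * m.factorial)]
  rw [Finset.sum_mul]
  apply Finset.sum_congr rfl
  intro t _
  have hconst : ∀ P ∈ Finset.univ.filter
      (fun P : {P : Finset (Finset (Fin k)) // IsSetPartition P} => P.1.card = t),
      (P.1.card.choose m) * m.factorial = (t.choose m) * m.factorial := by
    intro P hP
    rw [(Finset.mem_filter.mp hP).2]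
  rw [Finset.sum_congr rfl hconst, Finset.sum_const, smul_eq_mul]
  have hcount : (Finset.univ.filter
      (fun P : {P : Finset (Finset (Fin k)) // IsSetPartition P} => P.1.card = t)).card =
      stirling2 k t := by
    rw [← card_setPartitions k t]
    apply Finset.card_bij (fun P _ => P.1)
    · intro P hP
      rw [Finset.mem_filter]
      exact ⟨Finset.mem_univ _, P.2, (Finset.mem_filter.mp hP).2⟩
    · intro P _ P' _ h
      exact Subtype.ext h
    · intro Q hQ
      rw [Finset.mem_filter] at hQ
      refine ⟨⟨Q, hQ.2.1⟩, ?_, rfl⟩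
      rw [Finset.mem_filter]
      exact ⟨Finset.mem_univ _, hQ.2.2⟩
  rw [hcount, mul_assoc]
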